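/- Let κ > 0 and set Det(λ) = 2κ²λ^{−1/2}(1−cos√λ)(1+κ²/λ) − sin(√λ)(κ²/√λ+√λ)² for λ > 0. Then the limit as λ → 0⁺ of Det(λ)/√λ exists and equals κ²·(κ²/12 − 1). In particular this limit is zero if and only if κ² = 12. -/

import Mathlib

/-!
Substituting `λ = t²` writes `Det(λ)/√λ` as
`2κ² (1 - cos t)/t² + κ⁴ (2(1 - cos t) - t sin t)/t⁴ - 2κ² (sin t)/t - t sin t`,
whose four quotients tend to `1/2`, `1/12`, `1` and `0` as `t → 0⁺` (L'Hôpital's rule, applied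
twice for the quartic one), so the limit is `κ² + κ⁴/12 - 2κ² = κ²(κ²/12 - 1)`.
-/

/-- The determinant `Det(λ)` of the 2×2 linear system obtained by imposing the
non-local boundary conditions on `a·sin(√λ x) + b·cos(√λ x)`. -/
noncomputable def Det (κ l : ℝ) : ℝ :=
  2 * κ ^ 2 / Real.sqrt l * (1 - Real.cos (Real.sqrt l)) * (1 + κ ^ 2 / l)
    - Real.sin (Real.sqrt l) * (κ ^ 2 / Real.sqrt l + Real.sqrt l) ^ 2

open Filter Topology Real Set

theorem tendsto_div_nhdsGT_of_hasDerivAt {f g f' g' : ℝ → ℝ} {a : ℝ} {l : Filter ℝ}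
    (hf : ∀ x, HasDerivAt f (f' x) x) (hg : ∀ x, HasDerivAt g (g' x) x)
    (hfa : f a = 0) (hga : g a = 0) (hg' : ∀ x > a, g' x ≠ 0)
    (hdiv : Tendsto (fun x => f' x / g' x) (𝓝[>] a) l) :
    Tendsto (fun x => f x / g x) (𝓝[>] a) l := by
  have hlim {h h' : ℝ → ℝ} (hh : ∀ x, HasDerivAt h (h' x) x) (ha : h a = 0) :
      Tendsto h (𝓝[>] a) (𝓝 0) :=
    ha ▸ (hh a).continuousAt.tendsto.mono_left nhdsWithin_le_nhds
  exact HasDerivAt.lhopital_zero_nhdsGT (.of_forall hf) (.of_forall hg)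
    (eventually_nhdsWithin_of_forall hg') (hlim hf hfa) (hlim hg hga) hdiv

theorem tendsto_sin_div_nhdsGT : Tendsto (fun t => sin t / t) (𝓝[>] 0) (𝓝 1) := by
  refine (sinc_zero ▸ continuous_sinc.tendsto 0).mono_left nhdsWithin_le_nhds |>.congr' ?_
  filter_upwards [self_mem_nhdsWithin] with t ht
  exact sinc_of_ne_zero (ne_of_gt ht)

theorem tendsto_one_sub_cos_div_sq :
    Tendsto (fun t => (1 - cos t) / t ^ 2) (𝓝[>] 0) (𝓝 (1 / 2)) := by
  refine tendsto_div_nhdsGT_of_hasDerivAt (f' := sin) (g' := fun t => t * 2)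
    (fun x => by simpa using (hasDerivAt_cos x).const_sub 1)
    (fun x => by simpa [mul_comm] using hasDerivAt_pow 2 x)
    (by simp) (by simp) (fun x hx => by positivity) ?_
  simpa only [div_div] using tendsto_sin_div_nhdsGT.div_const 2

theorem tendsto_sin_sub_mul_cos_div_cube :
    Tendsto (fun t => (sin t - t * cos t) / t ^ 3) (𝓝[>] 0) (𝓝 (1 / 3)) := by
  refine tendsto_div_nhdsGT_of_hasDerivAt (f' := fun t => t * sin t) (g' := fun t => 3 * t ^ 2)
    (fun x => ((hasDerivAt_sin x).sub ((hasDerivAt_id x).mul (hasDerivAt_cos x))).congr_deriv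
      (by simp only [id_eq]; ring))
    (fun x => by simpa using hasDerivAt_pow 3 x)
    (by simp) (by simp) (fun x hx => by positivity) ?_
  refine (tendsto_sin_div_nhdsGT.div_const 3).congr' ?_
  filter_upwards [self_mem_nhdsWithin] with t ht
  field_simp [(mem_Ioi.mp ht).ne']

theorem tendsto_two_mul_one_sub_cos_sub_mul_sin_div_pow_four :
    Tendsto (fun t => (2 * (1 - cos t) - t * sin t) / t ^ 4) (𝓝[>] 0) (𝓝 (1 / 12)) := by
  refine tendsto_div_nhdsGT_of_hasDerivAt (f' := fun t => sin t - t * cos t)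
    (g' := fun t => t ^ 3 * 4)
    (fun x => ((((hasDerivAt_cos x).const_sub 1).const_mul 2).sub
      ((hasDerivAt_id x).mul (hasDerivAt_sin x))).congr_deriv (by simp only [id_eq]; ring))
    (fun x => by simpa [mul_comm] using hasDerivAt_pow 4 x)
    (by simp) (by simp) (fun x hx => by positivity) ?_
  convert tendsto_sin_sub_mul_cos_div_cube.div_const 4 using 2 <;> ring

theorem tendsto_sqrt_nhdsGT_zero : Tendsto sqrt (𝓝[>] 0) (𝓝[>] 0) :=
  tendsto_nhdsWithin_of_tendsto_nhds_of_eventually_within _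
    (sqrt_zero ▸ continuous_sqrt.tendsto 0 |>.mono_left nhdsWithin_le_nhds)
    (eventually_nhdsWithin_of_forall fun _ hx => sqrt_pos.mpr hx)

theorem det_sq_div {t : ℝ} (κ : ℝ) (ht : 0 < t) :
    Det κ (t ^ 2) / t = 2 * κ ^ 2 * ((1 - cos t) / t ^ 2)
      + κ ^ 4 * ((2 * (1 - cos t) - t * sin t) / t ^ 4) - 2 * κ ^ 2 * (sin t / t) - t * sin t := by
  rw [Det, sqrt_sq ht.le]
  field_simp
  ring

theorem tendsto_det_sq_div (κ : ℝ) :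
    Tendsto (fun t => Det κ (t ^ 2) / t) (𝓝[>] 0) (𝓝 (κ ^ 2 * (κ ^ 2 / 12 - 1))) := by
  have hmul_sin : Tendsto (fun t => t * sin t) (𝓝[>] 0) (𝓝 0) := by
    have hcont : Continuous fun t => t * sin t := by fun_prop
    simpa using (hcont.tendsto 0).mono_left nhdsWithin_le_nhds
  have hlim := (((tendsto_one_sub_cos_div_sq.const_mul (2 * κ ^ 2)).add
    (tendsto_two_mul_one_sub_cos_sub_mul_sin_div_pow_four.const_mul (κ ^ 4))).sub
    (tendsto_sin_div_nhdsGT.const_mul (2 * κ ^ 2))).sub hmul_sin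
  convert hlim.congr' ?_ using 2
  · ring
  · filter_upwards [self_mem_nhdsWithin] with t ht
    exact (det_sq_div κ ht).symm

/-- **Behavior of the determinant at the origin.**
`Det(λ)/√λ → κ²(κ²/12 - 1)` as `λ → 0⁺`; this limit is zero iff `κ² = 12`. -/
theorem det_limit_at_zero (κ : ℝ) (hκ : 0 < κ) :
    Tendsto (fun l => Det κ l / Real.sqrt l) (𝓝[>] (0:ℝ))
      (𝓝 (κ ^ 2 * (κ ^ 2 / 12 - 1))) ∧
    (κ ^ 2 * (κ ^ 2 / 12 - 1) = 0 ↔ κ ^ 2 = 12) := by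
  refine ⟨?_, ?_⟩
  · refine ((tendsto_det_sq_div κ).comp tendsto_sqrt_nhdsGT_zero).congr' ?_
    filter_upwards [self_mem_nhdsWithin] with l hl
    simp only [Function.comp, sq_sqrt (le_of_lt hl)]
  · rw [mul_eq_zero, or_iff_right (pow_ne_zero 2 hκ.ne'), sub_eq_zero,
      div_eq_one_iff_eq (by norm_num)]
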